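/- Let x₁, x₂, x₃ ∈ ℝⁿ be pairwise distinct. If p_i(x₁,x₂,x₃) = 0 for at least n−1 values of the index i ∈ {1,…,n}, then x₁, x₂, x₃ lie on a common line. -/

import Mathlib

/-!
Write `a = x₂ - x₁` and `b = x₃ - x₁`. Clearing the denominators of `p_i` leaves the quadratic
form `b_i² ‖a‖² - 2 a_i b_i ⟪a, b⟫ + a_i² ‖b‖² = ‖b_i a - a_i b‖²`, so `p_i = 0` says exactly
`b_i a = a_i b`. This makes every `2 × 2` minor `a_j b_k - a_k b_j` with `j ∈ S` or `k ∈ S`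
vanish, and the remaining ones have `j = k` because `S` misses at most one index. Hence `b` is a
multiple of `a`.
-/

/-- The symmetrization quantity `p_i(x₁,x₂,x₃)`. -/
noncomputable def rieszSym {n : ℕ} (i : Fin n) (x₁ x₂ x₃ : EuclideanSpace ℝ (Fin n)) : ℝ :=
    ((x₂ - x₁) i / ‖x₂ - x₁‖ ^ 2) * ((x₃ - x₁) i / ‖x₃ - x₁‖ ^ 2) +
    ((x₁ - x₂) i / ‖x₁ - x₂‖ ^ 2) * ((x₃ - x₂) i / ‖x₃ - x₂‖ ^ 2) +
    ((x₁ - x₃) i / ‖x₁ - x₃‖ ^ 2) * ((x₂ - x₃) i / ‖x₂ - x₃‖ ^ 2)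

theorem norm_smul_sub_smul_sq {E : Type*} [NormedAddCommGroup E] [InnerProductSpace ℝ E]
    (s t : ℝ) (a b : E) :
    ‖s • a - t • b‖ ^ 2 = s ^ 2 * ‖a‖ ^ 2 - 2 * (s * t) * inner ℝ a b + t ^ 2 * ‖b‖ ^ 2 := by
  rw [norm_sub_sq_real, norm_smul, norm_smul, real_inner_smul_left, real_inner_smul_right,
    Real.norm_eq_abs, Real.norm_eq_abs, mul_pow, mul_pow, sq_abs, sq_abs]
  ring

theorem rieszSym_mul_norm_sq {n : ℕ} (i : Fin n) {x₁ x₂ x₃ : EuclideanSpace ℝ (Fin n)}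
    (h₁₂ : x₁ ≠ x₂) (h₁₃ : x₁ ≠ x₃) (h₂₃ : x₂ ≠ x₃) :
    ‖x₂ - x₁‖ ^ 2 * ‖x₃ - x₁‖ ^ 2 * ‖x₃ - x₂‖ ^ 2 * rieszSym i x₁ x₂ x₃ =
      ‖(x₃ - x₁) i • (x₂ - x₁) - (x₂ - x₁) i • (x₃ - x₁)‖ ^ 2 := by
  have h₂₁ : ‖x₂ - x₁‖ ≠ 0 := norm_ne_zero_iff.2 (sub_ne_zero.2 h₁₂.symm)
  have h₃₁ : ‖x₃ - x₁‖ ≠ 0 := norm_ne_zero_iff.2 (sub_ne_zero.2 h₁₃.symm)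
  have h₃₂ : ‖x₃ - x₂‖ ≠ 0 := norm_ne_zero_iff.2 (sub_ne_zero.2 h₂₃.symm)
  have hcos : ‖x₃ - x₂‖ ^ 2 = ‖x₃ - x₁‖ ^ 2 - 2 * inner ℝ (x₂ - x₁) (x₃ - x₁) + ‖x₂ - x₁‖ ^ 2 := by
    rw [← sub_sub_sub_cancel_right x₃ x₂ x₁, norm_sub_sq_real, real_inner_comm]
  rw [norm_smul_sub_smul_sq, rieszSym, norm_sub_rev x₁ x₂, norm_sub_rev x₁ x₃, norm_sub_rev x₂ x₃]
  simp only [PiLp.sub_apply]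
  field_simp
  linear_combination (x₂ i - x₁ i) * (x₃ i - x₁ i) * hcos

theorem rieszSym_eq_zero_iff {n : ℕ} (i : Fin n) {x₁ x₂ x₃ : EuclideanSpace ℝ (Fin n)}
    (h₁₂ : x₁ ≠ x₂) (h₁₃ : x₁ ≠ x₃) (h₂₃ : x₂ ≠ x₃) :
    rieszSym i x₁ x₂ x₃ = 0 ↔ (x₃ - x₁) i • (x₂ - x₁) = (x₂ - x₁) i • (x₃ - x₁) := by
  have hpos : 0 < ‖x₂ - x₁‖ ^ 2 * ‖x₃ - x₁‖ ^ 2 * ‖x₃ - x₂‖ ^ 2 := by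
    have := sub_ne_zero.2 h₁₂.symm
    have := sub_ne_zero.2 h₁₃.symm
    have := sub_ne_zero.2 h₂₃.symm
    positivity
  rw [← mul_eq_zero_iff_left hpos.ne', rieszSym_mul_norm_sq i h₁₂ h₁₃ h₂₃, sq_eq_zero_iff,
    norm_eq_zero, sub_eq_zero]

theorem PiLp.exists_eq_smul_of_forall_mem_smul_eq_smul {K ι : Type*} [Field K] {p : ENNReal}
    {u v : PiLp p (fun _ : ι => K)} {S : Set ι} (hu : u ≠ 0) (hS : Sᶜ.Subsingleton)
    (h : ∀ i ∈ S, v i • u = u i • v) : ∃ t : K, v = t • u := by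
  obtain ⟨j, hj⟩ : ∃ j, u j ≠ 0 := by
    by_contra! h0
    exact hu (PiLp.ext h0)
  refine ⟨v j / u j, PiLp.ext fun k => ?_⟩
  rw [WithLp.ofLp_smul, Pi.smul_apply, smul_eq_mul, div_mul_eq_mul_div, eq_div_iff hj]
  by_cases hjS : j ∈ S
  · simpa [mul_comm] using (congrArg (· k) (h j hjS)).symm
  by_cases hkS : k ∈ S
  · simpa [mul_comm] using congrArg (· j) (h k hkS)
  obtain rfl := hS hkS hjS
  rfl

theorem collinear_of_sub_eq_smul_sub {k V : Type*} [Field k] [AddCommGroup V] [Module k V]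
    {x₁ x₂ x₃ : V} {t : k} (h : x₃ - x₁ = t • (x₂ - x₁)) : Collinear k ({x₁, x₂, x₃} : Set V) := by
  have hx₃ : x₃ ∈ line[k, x₂, x₁] := by
    simpa [← h] using smul_vsub_rev_vadd_mem_affineSpan_pair t x₂ x₁
  rw [Set.insert_comm, Set.pair_comm, Set.insert_comm]
  exact collinear_insert_of_mem_affineSpan_pair hx₃

/-- If `p_i(x₁,x₂,x₃) = 0` for at least `n − 1` values of the index `i`, then
the pairwise distinct points `x₁, x₂, x₃` lie on a common line. -/
theorem collinear_of_rieszSym_eq_zero (n : ℕ) (x₁ x₂ x₃ : EuclideanSpace ℝ (Fin n))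
    (h₁₂ : x₁ ≠ x₂) (h₁₃ : x₁ ≠ x₃) (h₂₃ : x₂ ≠ x₃)
    (S : Finset (Fin n)) (hS : n - 1 ≤ S.card)
    (hp : ∀ i ∈ S, rieszSym i x₁ x₂ x₃ = 0) :
    Collinear ℝ ({x₁, x₂, x₃} : Set (EuclideanSpace ℝ (Fin n))) := by
  have hSc : (↑S : Set (Fin n))ᶜ.Subsingleton := by
    rw [← Finset.coe_compl, ← Finset.card_le_one_iff_subsingleton, Finset.card_compl,
      Fintype.card_fin]
    omega
  obtain ⟨t, ht⟩ := PiLp.exists_eq_smul_of_forall_mem_smul_eq_smul (sub_ne_zero.2 h₁₂.symm) hSc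
    fun i hi => (rieszSym_eq_zero_iff i h₁₂ h₁₃ h₂₃).1 (hp i hi)
  exact collinear_of_sub_eq_smul_sub ht
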